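/- arXiv:1103.6271 — 4 statements merged into one kernel-verified Lean document; each statement's English description precedes it below -/
import Mathlib

section
/- Let f(x) = sin(x)(1 - 1/(8 sin(x/2)^3)) for x in (0, 2π). Then f'(x) ≥ f'(π) = -7/8 for all x in (0, 2π). -/
/-! With `s = sin (x / 2)`, which lies in `(0, 1]` on `(0, 2π)`, we have `cos x = 1 - 2 s²`, and
`f' x + 7/8 = (1 - s) (16 s⁴ + 16 s³ + s² + 2 s + 2) / (8 s³) ≥ 0`, with equality exactly at
`s = 1`, i.e. at `x = π`. -/

open Real Set

noncomputable def f (x : ℝ) : ℝ := Real.sin x * (1 - 1 / (8 * (Real.sin (x/2))^3))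

theorem cos_eq_one_sub_two_mul_sin_half_sq (x : ℝ) : cos x = 1 - 2 * sin (x / 2) ^ 2 := by
  rw [← cos_two_mul_eq_one_sub, mul_div_cancel₀ x two_ne_zero]

theorem hasDerivAt_f {x : ℝ} (hx : sin (x / 2) ≠ 0) :
    HasDerivAt f (cos x + (3 + cos x) / (16 * sin (x / 2) ^ 3)) x := by
  have hhalf : HasDerivAt (fun y => sin (y / 2)) (cos (x / 2) * (1 / 2)) x :=
    ((hasDerivAt_id' x).div_const 2).sin
  have hf : HasDerivAt f _ x := (hasDerivAt_sin x).mul ((hasDerivAt_const x (1 : ℝ)).sub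
    ((hasDerivAt_const x (1 : ℝ)).div ((hhalf.pow 3).const_mul 8) (by simp [hx])))
  convert hf using 1
  have hsin : sin x = 2 * sin (x / 2) * cos (x / 2) := by
    rw [← sin_two_mul, mul_div_cancel₀ x two_ne_zero]
  rw [hsin, cos_eq_one_sub_two_mul_sin_half_sq]
  field_simp
  linear_combination (-48 * sin (x / 2) ^ 2) * sin_sq_add_cos_sq (x / 2)

theorem neg_seven_div_eight_le_cos_add {x : ℝ} (hx : 0 < sin (x / 2)) :
    -7 / 8 ≤ cos x + (3 + cos x) / (16 * sin (x / 2) ^ 3) := by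
  rw [cos_eq_one_sub_two_mul_sin_half_sq]
  set s := sin (x / 2)
  have hfactor : 1 - 2 * s ^ 2 + (3 + (1 - 2 * s ^ 2)) / (16 * s ^ 3) + 7 / 8 =
      (1 - s) * (16 * s ^ 4 + 16 * s ^ 3 + s ^ 2 + 2 * s + 2) / (8 * s ^ 3) := by
    field_simp
    ring
  have hs₁ : 0 ≤ 1 - s := sub_nonneg.2 (sin_le_one _)
  have : 0 ≤ (1 - s) * (16 * s ^ 4 + 16 * s ^ 3 + s ^ 2 + 2 * s + 2) / (8 * s ^ 3) := by
    positivity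
  linarith

theorem sin_half_pos_of_mem_Ioo {x : ℝ} (hx : x ∈ Ioo 0 (2 * π)) : 0 < sin (x / 2) :=
  sin_pos_of_pos_of_lt_pi (by linarith [hx.1]) (by linarith [hx.2])

theorem stmt2 : deriv f π = -7/8 ∧ ∀ x ∈ Ioo (0:ℝ) (2*π), deriv f x ≥ -7/8 := by
  have hderiv : ∀ x ∈ Ioo 0 (2 * π),
      deriv f x = cos x + (3 + cos x) / (16 * sin (x / 2) ^ 3) := fun x hx ↦
    (hasDerivAt_f (sin_half_pos_of_mem_Ioo hx).ne').deriv
  refine ⟨?_, fun x hx ↦ ?_⟩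
  · rw [hderiv π ⟨pi_pos, by linarith [pi_pos]⟩, cos_pi, sin_pi_div_two]
    norm_num
  · rw [hderiv x hx]
    exact neg_seven_div_eight_le_cos_add (sin_half_pos_of_mem_Ioo hx)
end

section
/- Let f(x) = sin(x)(1 - 1/(8 sin(x/2)^3)) for x in (0, 2π). The only roots of f in (0, 2π) are x = π/3, x = π, and x = 5π/3. -/
/-! `f x = 0` exactly when `sin x = 0`, which on `(0, 2π)` means `x = π`, or `8 sin (x/2)^3 = 1`
(with the convention `1/0 = 0` this needs no case split on `sin (x/2) = 0`). Since cubing is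
injective on `ℝ`, the latter means `sin (x/2) = 1/2`, i.e. `x/2 ∈ {π/6, 5π/6}`. -/

open Real Set

lemma eight_mul_pow_three_eq_one_iff {s : ℝ} : 8 * s ^ 3 = 1 ↔ s = 1 / 2 := by
  rw [show 8 * s ^ 3 = (2 * s) ^ 3 by ring, show (1 : ℝ) = 1 ^ 3 by norm_num,
    (by decide : Odd 3).pow_inj]
  constructor <;> intro h <;> linarith

lemma f_eq_zero_iff {x : ℝ} : f x = 0 ↔ Real.sin x = 0 ∨ Real.sin (x / 2) = 1 / 2 := by
  rw [f, mul_eq_zero, sub_eq_zero, one_div, eq_comm (a := (1 : ℝ)), inv_eq_one,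
    eight_mul_pow_three_eq_one_iff]

lemma sin_eq_zero_iff_of_mem_Ioo {x : ℝ} (hx : x ∈ Ioo 0 (2 * π)) : Real.sin x = 0 ↔ x = π := by
  rw [← neg_eq_zero, ← Real.sin_sub_pi, sin_eq_zero_iff_of_lt_of_lt (by linarith [hx.1])
    (by linarith [hx.2]), sub_eq_zero]

lemma sin_eq_one_half_iff_of_mem_Ioo {t : ℝ} (ht : t ∈ Ioo 0 π) :
    Real.sin t = 1 / 2 ↔ t = π / 6 ∨ t = 5 * π / 6 := by
  obtain ⟨h0, hπ⟩ := ht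
  have hpi := Real.pi_pos
  rw [← Real.sin_pi_div_six]
  constructor
  · intro hs
    rcases le_or_gt t (π / 2) with hle | hgt
    · exact Or.inl <| Real.injOn_sin ⟨by linarith, hle⟩ ⟨by linarith, by linarith⟩ hs
    · have h : π - t = π / 6 := Real.injOn_sin ⟨by linarith, by linarith⟩
        ⟨by linarith, by linarith⟩ (by rw [Real.sin_pi_sub, hs])
      exact Or.inr (by linarith)
  · rintro (rfl | rfl)
    · rfl
    · rw [show 5 * π / 6 = π - π / 6 by ring, Real.sin_pi_sub]

theorem stmt4 : ∀ x ∈ Ioo (0:ℝ) (2*π), (f x = 0 ↔ x = π/3 ∨ x = π ∨ x = 5*π/3) := by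
  intro x hx
  have hhalf : x / 2 ∈ Ioo 0 π := ⟨by linarith [hx.1], by linarith [hx.2]⟩
  rw [f_eq_zero_iff, sin_eq_zero_iff_of_mem_Ioo hx,
    sin_eq_one_half_iff_of_mem_Ioo hhalf]
  constructor
  · rintro (h | h | h)
    exacts [Or.inr (Or.inl h), Or.inl (by linarith), Or.inr (Or.inr (by linarith))]
  · rintro (h | h | h)
    exacts [Or.inr (Or.inl (by linarith)), Or.inl h, Or.inr (Or.inr (by linarith))]
end

section
/- Let f(x) = sin(x)(1 - 1/(8 sin(x/2)^3)). There are no θ₁, θ₂' > 0 with θ₁ + θ₂' < 2π such that f(θ₁) = 0, f(θ₂') = 0, and f(θ₁ + θ₂') = 0. -/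
/-
Since sin (x/2) > 0 on (0, 2π), f x = 0 there means either sin x = 0, i.e. x = π, or
sin (x/2) ^ 3 = 1/8, i.e. sin (x/2) = 1/2, i.e. x = π/3 or x = 5π/3. No sum of two of
π/3, π, 5π/3 lies again in this set.
-/

open Real Set

lemma eq_pi_of_sin_eq_zero {x : ℝ} (h₀ : 0 < x) (h₂π : x < 2 * π) (hx : sin x = 0) : x = π := by
  have : sin (x - π) = 0 := by rw [sin_sub_pi, hx, neg_zero]
  linarith [(sin_eq_zero_iff_of_lt_of_lt (by linarith) (by linarith)).1 this]

lemma eq_pi_div_three_or_of_sin_half_eq_half {x : ℝ} (h₀ : 0 < x) (h₂π : x < 2 * π)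
    (hx : sin (x / 2) = 1 / 2) : x = π / 3 ∨ x = 5 * π / 3 := by
  have hπ6 : π / 6 ∈ Icc (-(π / 2)) (π / 2) := ⟨by linarith [pi_pos], by linarith [pi_pos]⟩
  rcases le_or_gt (x / 2) (π / 2) with hle | hgt
  · left
    have := injOn_sin ⟨by linarith, hle⟩ hπ6 (by rw [hx, sin_pi_div_six])
    linarith
  · right
    have := injOn_sin (⟨by linarith, by linarith⟩ : π - x / 2 ∈ Icc (-(π / 2)) (π / 2)) hπ6
      (by rw [sin_pi_sub, hx, sin_pi_div_six])
    linarith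

lemma eq_of_f_eq_zero {x : ℝ} (h₀ : 0 < x) (h₂π : x < 2 * π) (hx : f x = 0) :
    x = π / 3 ∨ x = π ∨ x = 5 * π / 3 := by
  have hs : 0 < sin (x / 2) := sin_pos_of_pos_of_lt_pi (by linarith) (by linarith)
  rcases mul_eq_zero.1 hx with hsin | hcube
  · exact Or.inr (Or.inl (eq_pi_of_sin_eq_zero h₀ h₂π hsin))
  · have hcube' : sin (x / 2) ^ 3 = (1 / 2) ^ 3 := by
      field_simp at hcube
      linarith
    have hhalf : sin (x / 2) = 1 / 2 :=
      (pow_left_inj₀ hs.le (by norm_num) (by norm_num)).1 hcube'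
    rcases eq_pi_div_three_or_of_sin_half_eq_half h₀ h₂π hhalf with h | h
    · exact Or.inl h
    · exact Or.inr (Or.inr h)

theorem stmt8 : ¬ ∃ θ₁ θ₂' : ℝ, 0 < θ₁ ∧ 0 < θ₂' ∧ θ₁ + θ₂' < 2*π ∧
    f θ₁ = 0 ∧ f θ₂' = 0 ∧ f (θ₁ + θ₂') = 0 := by
  rintro ⟨a, b, ha, hb, hab, hfa, hfb, hfab⟩
  have h₁ := eq_of_f_eq_zero ha (by linarith) hfa
  have h₂ := eq_of_f_eq_zero hb (by linarith) hfb
  have h₃ := eq_of_f_eq_zero (by linarith) hab hfab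
  have := pi_pos
  rcases h₁ with h₁ | h₁ | h₁ <;> rcases h₂ with h₂ | h₂ | h₂ <;>
    rcases h₃ with h₃ | h₃ | h₃ <;> linarith
end

section
/- Let f(x) = sin(x)(1 - 1/(8 sin(x/2)^3)). The only solutions x ∈ (0, π) of f(x) + f(2x) = 0 in (0, π) are exactly three: x = 2π/3, a root a with 0 < a < 5π/18, and a root b with 2π/3 < b < π, with 138π/180 < b < 139π/180. -/
open Real Set

/-!
Write `s = sin (x / 2)` and `t = cos (x / 2)`. Clearing denominators, `f x + f (2 x)` is a
nonzero multiple of `(2 t - 1) (32 s³ t³ (2 t + 1) - (2 t² + 2 t + 1))`; the first factor gives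
`x = 2π/3`. Both terms of the second factor are positive, so squaring it and substituting
`s² = 1 - t²` turns it into the polynomial `halfAnglePoly`, which changes sign on
`[0.351, 0.353]` and on `[0.91, 1]`. It has no other root in `(0, 1)`, because the logarithm of
the ratio of its two terms is strictly concave there: its only convex summand
`-2 log (2 t² + 2 t + 1)` is dominated by `6 log t`. Going back through `x = 2 arccos t`,
elementary bounds on `cos` locate `a` and `b`.
-/

def halfAnglePoly (t : ℝ) : ℝ :=
  1024 * (1 - t ^ 2) ^ 3 * t ^ 6 * (2 * t + 1) ^ 2 - (2 * t ^ 2 + 2 * t + 1) ^ 2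

lemma f_add_f_two_mul_mul_eq {x : ℝ} (hs : sin (x / 2) ≠ 0) (hc : cos (x / 2) ≠ 0) :
    (f x + f (2 * x)) * (16 * sin (x / 2) ^ 2 * cos (x / 2) ^ 2) =
      (2 * cos (x / 2) - 1) * (32 * sin (x / 2) ^ 3 * cos (x / 2) ^ 3 * (2 * cos (x / 2) + 1)
        - (2 * cos (x / 2) ^ 2 + 2 * cos (x / 2) + 1)) := by
  have hsin : sin x = 2 * sin (x / 2) * cos (x / 2) := by
    rw [← sin_two_mul, mul_div_cancel₀ x two_ne_zero]
  have hcos : cos x = 2 * cos (x / 2) ^ 2 - 1 := by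
    rw [← cos_two_mul, mul_div_cancel₀ x two_ne_zero]
  unfold f
  rw [mul_div_cancel_left₀ x two_ne_zero, sin_two_mul, hcos, hsin]
  field_simp
  ring

lemma mul_eq_iff_halfAnglePoly_eq_zero {s t : ℝ} (hs : 0 ≤ s) (ht : 0 ≤ t)
    (hst : s ^ 2 + t ^ 2 = 1) :
    32 * s ^ 3 * t ^ 3 * (2 * t + 1) = 2 * t ^ 2 + 2 * t + 1 ↔ halfAnglePoly t = 0 := by
  have hP : halfAnglePoly t =
      (32 * s ^ 3 * t ^ 3 * (2 * t + 1)) ^ 2 - (2 * t ^ 2 + 2 * t + 1) ^ 2 := by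
    rw [halfAnglePoly, show 1 - t ^ 2 = s ^ 2 by linarith]
    ring
  rw [hP, sub_eq_zero, sq_eq_sq₀ (by positivity) (by positivity)]

lemma cos_half_mem_Ioo {x : ℝ} (hx : x ∈ Ioo 0 π) : cos (x / 2) ∈ Ioo 0 1 :=
  ⟨cos_pos_of_mem_Ioo ⟨by linarith [hx.1, pi_pos], by linarith [hx.2]⟩,
    cos_zero ▸ cos_lt_cos_of_nonneg_of_le_pi le_rfl (by linarith [hx.2, pi_pos])
      (by linarith [hx.1])⟩

lemma f_add_f_two_mul_eq_zero_iff {x : ℝ} (hx : x ∈ Ioo 0 π) :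
    f x + f (2 * x) = 0 ↔ cos (x / 2) = 1 / 2 ∨ halfAnglePoly (cos (x / 2)) = 0 := by
  have hs : 0 < sin (x / 2) :=
    sin_pos_of_pos_of_lt_pi (by linarith [hx.1]) (by linarith [hx.2, pi_pos])
  have hc : 0 < cos (x / 2) := (cos_half_mem_Ioo hx).1
  rw [← mul_eq_zero_iff_right (by positivity : 16 * sin (x / 2) ^ 2 * cos (x / 2) ^ 2 ≠ 0),
    f_add_f_two_mul_mul_eq hs.ne' hc.ne', mul_eq_zero, sub_eq_zero, sub_eq_zero,
    mul_eq_iff_halfAnglePoly_eq_zero hs.le hc.le (sin_sq_add_cos_sq _)]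
  exact or_congr (by constructor <;> intro h <;> linarith) Iff.rfl

section StrictConcaveOn

variable {𝕜 β : Type*} [Field 𝕜] [LinearOrder 𝕜] [IsStrictOrderedRing 𝕜]
  [AddCommMonoid β] [LinearOrder β] [IsOrderedAddMonoid β] [Module 𝕜 β] [PosSMulStrictMono 𝕜 β]
  {s : Set 𝕜} {g : 𝕜 → β} {a b x : 𝕜} {c : β}

lemma StrictConcaveOn.lt_of_eq_of_eq (hg : StrictConcaveOn 𝕜 s g) (ha : a ∈ s) (hb : b ∈ s)
    (hax : a < x) (hxb : x < b) (hga : g a = c) (hgb : g b = c) : c < g x := by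
  have hx : x ∈ openSegment 𝕜 a b := by
    rw [openSegment_eq_Ioo (hax.trans hxb)]
    exact ⟨hax, hxb⟩
  simpa [hga, hgb] using hg.lt_on_openSegment ha hb (hax.trans hxb).ne hx

lemma StrictConcaveOn.eq_or_eq_of_eq (hg : StrictConcaveOn 𝕜 s g) (ha : a ∈ s) (hb : b ∈ s)
    (hx : x ∈ s) (hab : a < b) (hga : g a = c) (hgb : g b = c) (hgx : g x = c) :
    x = a ∨ x = b := by
  by_contra! hne
  rcases lt_or_gt_of_ne hne.1 with hxa | hax
  · exact (hg.lt_of_eq_of_eq hx hb hxa hab hgx hgb).ne' hga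
  rcases lt_or_gt_of_ne hne.2 with hxb | hbx
  · exact (hg.lt_of_eq_of_eq ha hb hax hxb hga hgb).ne' hgx
  · exact (hg.lt_of_eq_of_eq ha hx hab hbx hga hgx).ne' hgb

end StrictConcaveOn

noncomputable def halfAngleLog (t : ℝ) : ℝ :=
  log 1024 + 3 * log (1 - t) + 3 * log (1 + t) + 6 * log t + 2 * log (2 * t + 1)
    - 2 * log (2 * t ^ 2 + 2 * t + 1)

noncomputable def halfAngleLogDeriv (t : ℝ) : ℝ :=
  3 / (1 + t) - 3 / (1 - t) + 6 / t + 4 / (2 * t + 1)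
    - 2 * (4 * t + 2) / (2 * t ^ 2 + 2 * t + 1)

lemma halfAnglePoly_eq_zero_iff {t : ℝ} (ht : t ∈ Ioo 0 1) :
    halfAnglePoly t = 0 ↔ halfAngleLog t = 0 := by
  obtain ⟨h0, h1⟩ := ht
  have h1t : 0 < 1 - t := by linarith
  have h1t' : 0 < 1 + t := by linarith
  have hA : 0 < 1024 * (1 - t ^ 2) ^ 3 * t ^ 6 * (2 * t + 1) ^ 2 := by
    have : 0 < 1 - t ^ 2 := by nlinarith
    positivity
  have hB : 0 < (2 * t ^ 2 + 2 * t + 1) ^ 2 := by positivity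
  have hlog : halfAngleLog t = log (1024 * (1 - t ^ 2) ^ 3 * t ^ 6 * (2 * t + 1) ^ 2)
      - log ((2 * t ^ 2 + 2 * t + 1) ^ 2) := by
    rw [show 1 - t ^ 2 = (1 - t) * (1 + t) by ring, log_mul (by positivity) (by positivity),
      log_mul (by positivity) (by positivity), log_mul (by positivity) (by positivity), log_pow,
      log_pow, log_pow, log_pow, log_mul h1t.ne' h1t'.ne', halfAngleLog]
    push_cast
    ring
  rw [hlog, halfAnglePoly, sub_eq_zero, sub_eq_zero]
  exact (log_injOn_pos.eq_iff hA hB).symm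

lemma hasDerivAt_halfAngleLog {t : ℝ} (ht : t ∈ Ioo 0 1) :
    HasDerivAt halfAngleLog (halfAngleLogDeriv t) t := by
  obtain ⟨h0, h1⟩ := ht
  have h1t : 1 - t ≠ 0 := by linarith
  have h1t' : 1 + t ≠ 0 := by linarith
  have hq : 2 * t ^ 2 + 2 * t + 1 ≠ 0 := by positivity
  have := (((((hasDerivAt_const t (log 1024)).add
    ((((hasDerivAt_id t).const_sub 1).log h1t).const_mul 3)).add
    ((((hasDerivAt_id t).const_add 1).log h1t').const_mul 3)).add
    (((hasDerivAt_id t).log h0.ne').const_mul 6)).add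
    (((((hasDerivAt_id t).const_mul 2).add_const 1).log (by positivity)).const_mul 2)).sub
    ((((((hasDerivAt_pow 2 t).const_mul 2).add ((hasDerivAt_id t).const_mul 2)).add_const 1).log
      hq).const_mul 2)
  refine (this : HasDerivAt halfAngleLog _ t).congr_deriv ?_
  simp only [id, Pi.add_apply, Nat.cast_ofNat, halfAngleLogDeriv]
  field_simp
  ring

lemma hasDerivAt_halfAngleLogDeriv {t : ℝ} (ht : t ∈ Ioo 0 1) :
    HasDerivAt halfAngleLogDeriv
      (16 * t * (t + 1) / (2 * t ^ 2 + 2 * t + 1) ^ 2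
        - 3 / (1 - t) ^ 2 - 3 / (1 + t) ^ 2 - 6 / t ^ 2 - 8 / (2 * t + 1) ^ 2) t := by
  obtain ⟨h0, h1⟩ := ht
  have h1t : 1 - t ≠ 0 := by linarith
  have h1t' : 1 + t ≠ 0 := by linarith
  have hq : 2 * t ^ 2 + 2 * t + 1 ≠ 0 := by positivity
  have := (((((hasDerivAt_const t (3 : ℝ)).div ((hasDerivAt_id t).const_add 1) h1t').sub
    ((hasDerivAt_const t (3 : ℝ)).div ((hasDerivAt_id t).const_sub 1) h1t)).add
    ((hasDerivAt_const t (6 : ℝ)).div (hasDerivAt_id t) h0.ne')).add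
    ((hasDerivAt_const t (4 : ℝ)).div (((hasDerivAt_id t).const_mul 2).add_const 1)
      (by positivity))).sub
    ((((hasDerivAt_id t).const_mul 4).add_const 2).const_mul 2 |>.div
      (((hasDerivAt_pow 2 t).const_mul 2).add ((hasDerivAt_id t).const_mul 2) |>.add_const 1) hq)
  refine (this : HasDerivAt halfAngleLogDeriv _ t).congr_deriv ?_
  simp only [id, Pi.add_apply, Nat.cast_ofNat]
  field_simp
  ring

lemma strictAntiOn_halfAngleLogDeriv : StrictAntiOn halfAngleLogDeriv (Ioo 0 1) := by
  refine strictAntiOn_of_hasDerivWithinAt_neg (convex_Ioo 0 1)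
    (fun t ht => (hasDerivAt_halfAngleLogDeriv ht).continuousAt.continuousWithinAt)
    (fun t ht => (hasDerivAt_halfAngleLogDeriv (interior_subset ht)).hasDerivWithinAt) ?_
  rw [interior_Ioo]
  rintro t ⟨h0, h1⟩
  have h1t : 0 < 1 - t := by linarith
  -- `6 / t ^ 2` alone outweighs the positive term, as `2 t (t + 1) < 2 t ^ 2 + 2 t + 1`.
  have hdom : 16 * t * (t + 1) / (2 * t ^ 2 + 2 * t + 1) ^ 2 < 6 / t ^ 2 := by
    rw [div_lt_div_iff₀ (by positivity) (by positivity)]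
    nlinarith [pow_pos h0 2, pow_pos h0 3, pow_pos h0 4]
  linarith [(by positivity : 0 < 3 / (1 - t) ^ 2), (by positivity : 0 < 3 / (1 + t) ^ 2),
    (by positivity : 0 < 8 / (2 * t + 1) ^ 2)]

lemma strictConcaveOn_halfAngleLog : StrictConcaveOn ℝ (Ioo 0 1) halfAngleLog := by
  refine StrictAntiOn.strictConcaveOn_of_deriv (convex_Ioo 0 1)
    (fun t ht => (hasDerivAt_halfAngleLog ht).continuousAt.continuousWithinAt) ?_
  rw [interior_Ioo]
  exact (EqOn.congr_strictAntiOn fun t ht => (hasDerivAt_halfAngleLog ht).deriv.symm).1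
    strictAntiOn_halfAngleLogDeriv

lemma exists_halfAnglePoly_roots : ∃ t₁ t₂ : ℝ, t₁ ∈ Ioo (351 / 1000) (353 / 1000) ∧
    t₂ ∈ Ioo (91 / 100) 1 ∧ ∀ t ∈ Ioo 0 1, halfAnglePoly t = 0 ↔ t = t₂ ∨ t = t₁ := by
  have hcont : Continuous halfAnglePoly := by unfold halfAnglePoly; fun_prop
  obtain ⟨t₁, ht₁, hP₁⟩ := intermediate_value_Ioo (by norm_num) hcont.continuousOn
    (show (0 : ℝ) ∈ Ioo (halfAnglePoly (351 / 1000)) (halfAnglePoly (353 / 1000)) by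
      norm_num [halfAnglePoly])
  obtain ⟨t₂, ht₂, hP₂⟩ := intermediate_value_Ioo' (by norm_num) hcont.continuousOn
    (show (0 : ℝ) ∈ Ioo (halfAnglePoly 1) (halfAnglePoly (91 / 100)) by norm_num [halfAnglePoly])
  have hmem₁ : t₁ ∈ Ioo (0 : ℝ) 1 := ⟨by linarith [ht₁.1], by linarith [ht₁.2]⟩
  have hmem₂ : t₂ ∈ Ioo (0 : ℝ) 1 := ⟨by linarith [ht₂.1], ht₂.2⟩
  refine ⟨t₁, t₂, ht₁, ht₂, fun t ht => ⟨fun hP => ?_, ?_⟩⟩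
  · exact (strictConcaveOn_halfAngleLog.eq_or_eq_of_eq hmem₁ hmem₂ ht
      (by linarith [ht₁.2, ht₂.1]) ((halfAnglePoly_eq_zero_iff hmem₁).1 hP₁)
      ((halfAnglePoly_eq_zero_iff hmem₂).1 hP₂) ((halfAnglePoly_eq_zero_iff ht).1 hP)).symm
  · rintro (rfl | rfl) <;> assumption

lemma cos_half_eq_iff {x c : ℝ} (hx : x ∈ Icc 0 (2 * π)) (hc : c ∈ Icc (-1) 1) :
    cos (x / 2) = c ↔ x = 2 * arccos c := by
  constructor
  · rintro rfl
    rw [arccos_cos (by linarith [hx.1]) (by linarith [hx.2])]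
    ring
  · rintro rfl
    rw [mul_div_cancel_left₀ _ two_ne_zero, cos_arccos hc.1 hc.2]

lemma arccos_lt_of_cos_lt {x y : ℝ} (hy₀ : 0 ≤ y) (hyπ : y ≤ π) (h : cos y < x) (hx : x ≤ 1) :
    arccos x < y := by
  simpa [arccos_cos hy₀ hyπ] using arccos_lt_arccos (neg_one_le_cos y) h hx

lemma lt_arccos_of_lt_cos {x y : ℝ} (hy₀ : 0 ≤ y) (hyπ : y ≤ π) (hx : -1 ≤ x) (h : x < cos y) :
    y < arccos x := by
  simpa [arccos_cos hy₀ hyπ] using arccos_lt_arccos hx h (cos_le_one y)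

lemma cos_five_mul_pi_div_36_lt : cos (5 * π / 36) < 91 / 100 := by
  have hy₁ : 0.436 < 5 * π / 36 := by linarith [pi_gt_d2]
  have hy₂ : 5 * π / 36 < 0.4375 := by linarith [pi_lt_d2]
  have h := (abs_le.1 (cos_bound (x := 5 * π / 36) (by rw [abs_le]; constructor <;> linarith))).2
  rw [abs_of_pos (by linarith)] at h
  have h2 := pow_lt_pow_left₀ hy₁ (by norm_num) two_ne_zero
  have h4 := pow_lt_pow_left₀ hy₂ (by linarith) four_ne_zero
  norm_num at h2 h4
  linarith

lemma cos_139_mul_pi_div_360_lt : cos (139 * π / 360) < 351 / 1000 := by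
  rw [show 139 * π / 360 = π / 2 - 41 * π / 360 by ring, cos_pi_div_two_sub]
  have hy₁ : 0.3577 < 41 * π / 360 := by linarith [pi_gt_d4]
  have hy₂ : 41 * π / 360 < 0.3578 := by linarith [pi_lt_d4]
  have h := (abs_le.1 (sin_bound (x := 41 * π / 360) (by rw [abs_le]; constructor <;> linarith))).2
  rw [abs_of_pos (by linarith)] at h
  have h3 := pow_lt_pow_left₀ hy₁ (by norm_num) three_ne_zero
  have h5 := pow_lt_pow_left₀ hy₂ (by linarith) (by norm_num : (5 : ℕ) ≠ 0)
  norm_num at h3 h5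
  linarith

lemma lt_cos_69_mul_pi_div_180 : 353 / 1000 < cos (69 * π / 180) := by
  rw [show 69 * π / 180 = π / 2 - 7 * π / 60 by ring, cos_pi_div_two_sub]
  have hy₁ : 0.366 < 7 * π / 60 := by linarith [pi_gt_d2]
  have hy₂ : 7 * π / 60 < 0.3675 := by linarith [pi_lt_d2]
  have h := sin_gt_sub_cube (x := 7 * π / 60) (by linarith)
  have h3 := pow_lt_pow_left₀ hy₂ (by linarith) three_ne_zero
  norm_num at h3
  linarith

theorem stmt14 : ∃ a b : ℝ, 0 < a ∧ a < 5*π/18 ∧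
    2*π/3 < b ∧ b < π ∧ 138*π/180 < b ∧ b < 139*π/180 ∧
    ∀ x ∈ Ioo (0:ℝ) π, (f x + f (2*x) = 0 ↔ x = 2*π/3 ∨ x = a ∨ x = b) := by
  obtain ⟨t₁, t₂, ⟨ht₁l, ht₁u⟩, ⟨ht₂l, ht₂u⟩, hroots⟩ := exists_halfAnglePoly_roots
  have hπ := pi_pos
  have ha : arccos t₂ < 5 * π / 36 := arccos_lt_of_cos_lt (by positivity) (by linarith)
    (by linarith [cos_five_mul_pi_div_36_lt]) ht₂u.le
  have hb₁ : 69 * π / 180 < arccos t₁ := lt_arccos_of_lt_cos (by positivity) (by linarith)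
    (by linarith) (by linarith [lt_cos_69_mul_pi_div_180])
  have hb₂ : arccos t₁ < 139 * π / 360 := arccos_lt_of_cos_lt (by positivity) (by linarith)
    (by linarith [cos_139_mul_pi_div_360_lt]) (by linarith)
  refine ⟨2 * arccos t₂, 2 * arccos t₁, by linarith [arccos_pos.2 ht₂u], by linarith,
    by linarith, by linarith, by linarith, by linarith, fun x hx => ?_⟩
  have hx' : x ∈ Icc 0 (2 * π) := ⟨hx.1.le, by linarith [hx.2]⟩
  rw [f_add_f_two_mul_eq_zero_iff hx, hroots _ (cos_half_mem_Ioo hx),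
    cos_half_eq_iff hx' ⟨by norm_num, by norm_num⟩, cos_half_eq_iff hx' ⟨by linarith, by linarith⟩,
    cos_half_eq_iff hx' ⟨by linarith, by linarith⟩, ← cos_pi_div_three,
    arccos_cos (by positivity) (by linarith), mul_div_assoc]
end
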